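/- Let x be a periodic point of the linear map A, i.e. A^N x = x for some N ≥ 1, and let N₀ be the least such N. Let μ_x be the minimal polynomial of x with respect to A. Then μ_x has nonzero constant term, μ_x divides the minimal polynomial of A, and N₀ equals the order of μ_x, i.e. N₀ is the least T ≥ 1 such that μ_x divides X^T − 1. -/
import Mathlib


/-- Let `x` be a periodic point of the linear map `A` with least period
`N₀ ≥ 1`, and let `μ` be the minimal polynomial of `x` with respect to `A` (the monic
generator of the annihilator ideal `{p : (aeval A p) x = 0}`). Then `μ` has nonzero
constant term, `μ` divides the minimal polynomial of `A`, and `N₀` equals the order of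
`μ`: `N₀` is the least `T ≥ 1` such that `μ ∣ X^T − 1`. -/
theorem least_period_eq_order_of_local_minpoly (n : ℕ) (hn : 0 < n)
    (A : Module.End (ZMod 2) (Fin n → ZMod 2)) (x : Fin n → ZMod 2)
    (N₀ : ℕ) (hN₀ : 1 ≤ N₀) (hx : (A ^ N₀) x = x)
    (hleast : ∀ N : ℕ, 1 ≤ N → (A ^ N) x = x → N₀ ≤ N)
    (μ : Polynomial (ZMod 2)) (hmonic : μ.Monic)
    (hann : (Polynomial.aeval A μ) x = 0)
    (hgen : ∀ p : Polynomial (ZMod 2), (Polynomial.aeval A p) x = 0 → μ ∣ p) :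
    μ.coeff 0 ≠ 0 ∧
    μ ∣ minpoly (ZMod 2) A ∧
    μ ∣ (Polynomial.X ^ N₀ - 1 : Polynomial (ZMod 2)) ∧
    (∀ T : ℕ, 1 ≤ T → μ ∣ (Polynomial.X ^ T - 1 : Polynomial (ZMod 2)) → N₀ ≤ T) := by

  have h3 : μ ∣ (Polynomial.X ^ N₀ - 1 : Polynomial (ZMod 2)) := by
    apply hgen
    simp [map_sub, Polynomial.aeval_X_pow, hx]
  refine ⟨?_, ?_, h3, ?_⟩
  · obtain ⟨r, hr⟩ := h3
    intro h0
    have hc := congrArg (fun p => Polynomial.coeff p 0) hr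
    have hne : ¬ (0 = N₀) := by omega
    simp [Polynomial.mul_coeff_zero, h0, Polynomial.coeff_X_pow, hne] at hc
  · apply hgen
    have hm : Polynomial.aeval A (minpoly (ZMod 2) A) = 0 := minpoly.aeval (ZMod 2) A
    rw [hm]
    rfl
  · intro T hT hd
    obtain ⟨r, hr⟩ := hd
    apply hleast T hT
    have h0 : (Polynomial.aeval A ((Polynomial.X : Polynomial (ZMod 2)) ^ T - 1)) x = 0 := by
      rw [hr, mul_comm, map_mul, Module.End.mul_apply, hann, map_zero]
    rw [map_sub, Polynomial.aeval_X_pow, map_one] at h0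
    simpa using sub_eq_zero.mp h0
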